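/- Let φ : ℝⁿ → S be an S-valued polynomial map that is monogenic and homogeneous of degree i, let 1 ≤ k ≤ n, and assume n+2i−2 ≠ 0. Define φ_k^+ = x_kφ + (n+2i)^{-1}·(x̲·E_kφ − |x|²·∂φ/∂x_k), φ_k^0 = (n+2i)^{-1}·(E_kφ − 2(n+2i−2)^{-1}·x̲·∂φ/∂x_k), and φ_k^- = (n+2i−2)^{-1}·∂φ/∂x_k. Then φ_k^+, φ_k^0, φ_k^- are monogenic polynomial maps, homogeneous of degrees i+1, i, i−1 respectively, and x_k·φ(x) = φ_k^+(x) − x̲·φ_k^0(x) + |x|²·φ_k^-(x) for all x ∈ ℝⁿ. (Here x̲·ψ denotes the map x ↦ (Σ_{a=1}^n x_a E_a)(ψ(x)) and E_kψ the map x ↦ E_k(ψ(x)).) -/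

import Mathlib

/- An `S`-valued polynomial map on `ℝⁿ` is identified with its (finitely supported) family of
coefficients `c : (Fin n →₀ ℕ) → S`, where `c α` is the coefficient of the monomial `x^α`.
The operations below are multiplication by the coordinate `x_k`, the partial derivative
`∂/∂x_k`, composition with an endomorphism of `S`, multiplication by `x̲ = Σ_a x_a E_a`,
multiplication by `|x|²`, and the Dirac operator `D = Σ_a E_a ∂/∂x_a`. -/

variable {S : Type*}

/-- Multiplication of a polynomial map by the coordinate function `x_k`. -/
noncomputable def mulXc {n : ℕ} [AddCommGroup S] [Module ℂ S] (k : Fin n) (c : (Fin n →₀ ℕ) → S) :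
    (Fin n →₀ ℕ) → S :=
  fun α => if α k = 0 then 0 else c (α - Finsupp.single k 1)

/-- The partial derivative `∂/∂x_k` of a polynomial map. -/
noncomputable def pderivc {n : ℕ} [AddCommGroup S] [Module ℂ S] (k : Fin n) (c : (Fin n →₀ ℕ) → S) :
    (Fin n →₀ ℕ) → S :=
  fun α => (α k + 1) • c (α + Finsupp.single k 1)

/-- Pointwise application of an endomorphism of `S` to a polynomial map. -/
noncomputable def applyEc {n : ℕ} [AddCommGroup S] [Module ℂ S] (T : S →ₗ[ℂ] S) (c : (Fin n →₀ ℕ) → S) :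
    (Fin n →₀ ℕ) → S :=
  fun α => T (c α)

/-- Multiplication of a polynomial map by `x̲ = Σ_a x_a E_a`. -/
noncomputable def xUnderc {n : ℕ} [AddCommGroup S] [Module ℂ S] (E : Fin n → S →ₗ[ℂ] S)
    (c : (Fin n →₀ ℕ) → S) : (Fin n →₀ ℕ) → S :=
  fun α => ∑ a, mulXc a (applyEc (E a) c) α

/-- Multiplication of a polynomial map by `|x|² = Σ_a x_a²`. -/
noncomputable def normSqMulc {n : ℕ} [AddCommGroup S] [Module ℂ S] (c : (Fin n →₀ ℕ) → S) :
    (Fin n →₀ ℕ) → S :=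
  fun α => ∑ a, mulXc a (mulXc a c) α

/-- The Dirac operator `D = Σ_a E_a ∂/∂x_a` on polynomial maps. -/
noncomputable def diracc {n : ℕ} [AddCommGroup S] [Module ℂ S] (E : Fin n → S →ₗ[ℂ] S)
    (c : (Fin n →₀ ℕ) → S) : (Fin n →₀ ℕ) → S :=
  fun α => ∑ a, E a (pderivc a c α)

/-- A polynomial map is homogeneous of degree `i` if all its monomials have total degree `i`. -/
def IsHomogC {n : ℕ} [AddCommGroup S] [Module ℂ S] (i : ℕ) (c : (Fin n →₀ ℕ) → S) : Prop :=
  ∀ α, c α ≠ 0 → (∑ a, α a) = i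


/-- The component `φ_k^+ = x_kφ + (n+2i)⁻¹·(x̲·E_kφ − |x|²·∂φ/∂x_k)`. -/
noncomputable def compPlusC {n : ℕ} [AddCommGroup S] [Module ℂ S] (E : Fin n → S →ₗ[ℂ] S)
    (i : ℕ) (k : Fin n) (c : (Fin n →₀ ℕ) → S) : (Fin n →₀ ℕ) → S :=
  mulXc k c + ((n : ℂ) + 2 * i)⁻¹ • (xUnderc E (applyEc (E k) c) - normSqMulc (pderivc k c))

/-- The component `φ_k^0 = (n+2i)⁻¹·(E_kφ − 2(n+2i−2)⁻¹·x̲·∂φ/∂x_k)`. -/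
noncomputable def compZeroC {n : ℕ} [AddCommGroup S] [Module ℂ S] (E : Fin n → S →ₗ[ℂ] S)
    (i : ℕ) (k : Fin n) (c : (Fin n →₀ ℕ) → S) : (Fin n →₀ ℕ) → S :=
  ((n : ℂ) + 2 * i)⁻¹ •
    (applyEc (E k) c - ((2 : ℂ) * ((n : ℂ) + 2 * i - 2)⁻¹) • xUnderc E (pderivc k c))

/-- The component `φ_k^- = (n+2i−2)⁻¹·∂φ/∂x_k`. -/
noncomputable def compMinusC {n : ℕ} [AddCommGroup S] [Module ℂ S]
    (i : ℕ) (k : Fin n) (c : (Fin n →₀ ℕ) → S) : (Fin n →₀ ℕ) → S :=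
  ((n : ℂ) + 2 * i - 2)⁻¹ • pderivc k c

section Aux
variable {n : ℕ} [AddCommGroup S] [Module ℂ S]

lemma sub_single_apply (k : Fin n) (α : Fin n →₀ ℕ) (x : Fin n) :
    ((α - Finsupp.single k 1 : Fin n →₀ ℕ)) x = α x - Finsupp.single k 1 x := by
  exact Finsupp.tsub_apply _ _ _

lemma sub_add_single {k : Fin n} {α : Fin n →₀ ℕ} (h : α k ≠ 0) :
    α - Finsupp.single k 1 + Finsupp.single k 1 = α := by
  ext x
  simp only [Finsupp.add_apply, sub_single_apply, Finsupp.single_apply]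
  by_cases hx : k = x
  · subst hx
    rw [if_pos rfl]
    omega
  · rw [if_neg hx]
    omega

lemma add_sub_single (k : Fin n) (α : Fin n →₀ ℕ) :
    α + Finsupp.single k 1 - Finsupp.single k 1 = α := by
  ext x
  simp only [Finsupp.add_apply, sub_single_apply]
  have := Finsupp.single_apply (a := k) (b := (1:ℕ)) (a' := x)
  omega

-- linearity
lemma mulXc_add (k : Fin n) (f g : (Fin n →₀ ℕ) → S) :
    mulXc k (f + g) = mulXc k f + mulXc k g := by
  funext α; by_cases h : α k = 0 <;> simp [mulXc, h]

lemma mulXc_smul (k : Fin n) (r : ℂ) (f : (Fin n →₀ ℕ) → S) :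
    mulXc k (r • f) = r • mulXc k f := by
  funext α; by_cases h : α k = 0 <;> simp [mulXc, h]

lemma mulXc_sub (k : Fin n) (f g : (Fin n →₀ ℕ) → S) :
    mulXc k (f - g) = mulXc k f - mulXc k g := by
  funext α; by_cases h : α k = 0 <;> simp [mulXc, h]

lemma mulXc_zero (k : Fin n) : mulXc k (0 : (Fin n →₀ ℕ) → S) = 0 := by
  funext α; by_cases h : α k = 0 <;> simp [mulXc, h]

lemma pderivc_add (k : Fin n) (f g : (Fin n →₀ ℕ) → S) :
    pderivc k (f + g) = pderivc k f + pderivc k g := by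
  funext α; simp [pderivc]

lemma pderivc_smul (k : Fin n) (r : ℂ) (f : (Fin n →₀ ℕ) → S) :
    pderivc k (r • f) = r • pderivc k f := by
  funext α
  show (α k + 1) • r • f (α + Finsupp.single k 1) = r • (α k + 1) • f (α + Finsupp.single k 1)
  rw [smul_comm]

lemma pderivc_zero (k : Fin n) : pderivc k (0 : (Fin n →₀ ℕ) → S) = 0 := by
  funext α; simp [pderivc]

lemma applyEc_add (T : S →ₗ[ℂ] S) (f g : (Fin n →₀ ℕ) → S) :
    applyEc T (f + g) = applyEc T f + applyEc T g := by
  funext α; simp [applyEc]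

lemma applyEc_smul (T : S →ₗ[ℂ] S) (r : ℂ) (f : (Fin n →₀ ℕ) → S) :
    applyEc T (r • f) = r • applyEc T f := by
  funext α; simp [applyEc]

lemma applyEc_sub (T : S →ₗ[ℂ] S) (f g : (Fin n →₀ ℕ) → S) :
    applyEc T (f - g) = applyEc T f - applyEc T g := by
  funext α; simp [applyEc]

lemma xUnderc_add (E : Fin n → S →ₗ[ℂ] S) (f g : (Fin n →₀ ℕ) → S) :
    xUnderc E (f + g) = xUnderc E f + xUnderc E g := by
  funext α
  simp [xUnderc, applyEc_add, mulXc_add, Finset.sum_add_distrib]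

lemma xUnderc_smul (E : Fin n → S →ₗ[ℂ] S) (r : ℂ) (f : (Fin n →₀ ℕ) → S) :
    xUnderc E (r • f) = r • xUnderc E f := by
  funext α
  simp [xUnderc, applyEc_smul, mulXc_smul, Finset.smul_sum]

lemma xUnderc_sub (E : Fin n → S →ₗ[ℂ] S) (f g : (Fin n →₀ ℕ) → S) :
    xUnderc E (f - g) = xUnderc E f - xUnderc E g := by
  funext α
  simp [xUnderc, applyEc_sub, mulXc_sub, Finset.sum_sub_distrib]

lemma applyEc_zero (T : S →ₗ[ℂ] S) : applyEc (n := n) T 0 = 0 := by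
  funext β; simp [applyEc]

lemma xUnderc_zero (E : Fin n → S →ₗ[ℂ] S) : xUnderc E (0 : (Fin n →₀ ℕ) → S) = 0 := by
  funext α
  show (∑ a, mulXc a (applyEc (E a) (0 : (Fin n →₀ ℕ) → S)) α) = 0
  apply Finset.sum_eq_zero
  intro a _
  rw [applyEc_zero, mulXc_zero]
  rfl

lemma normSqMulc_smul (r : ℂ) (f : (Fin n →₀ ℕ) → S) :
    normSqMulc (r • f) = r • normSqMulc f := by
  funext α
  simp [normSqMulc, mulXc_smul, Finset.smul_sum]

lemma normSqMulc_zero : normSqMulc (0 : (Fin n →₀ ℕ) → S) = 0 := by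
  funext α; simp [normSqMulc, mulXc_zero]

lemma diracc_add (E : Fin n → S →ₗ[ℂ] S) (f g : (Fin n →₀ ℕ) → S) :
    diracc E (f + g) = diracc E f + diracc E g := by
  funext α
  simp [diracc, pderivc_add, Finset.sum_add_distrib]

lemma diracc_smul (E : Fin n → S →ₗ[ℂ] S) (r : ℂ) (f : (Fin n →₀ ℕ) → S) :
    diracc E (r • f) = r • diracc E f := by
  funext α
  simp [diracc, pderivc_smul, Finset.smul_sum]

lemma diracc_sub (E : Fin n → S →ₗ[ℂ] S) (f g : (Fin n →₀ ℕ) → S) :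
    diracc E (f - g) = diracc E f - diracc E g := by
  funext α
  simp [diracc, pderivc, Finset.sum_sub_distrib, smul_sub]

end Aux
section Comm
variable {n : ℕ} [AddCommGroup S] [Module ℂ S]

lemma add_single_self (a : Fin n) (α : Fin n →₀ ℕ) :
    ((α + Finsupp.single a 1 : Fin n →₀ ℕ)) a = α a + 1 := by
  simp [Finsupp.add_apply]

lemma add_single_ne {a b : Fin n} (h : a ≠ b) (α : Fin n →₀ ℕ) :
    ((α + Finsupp.single a 1 : Fin n →₀ ℕ)) b = α b := by
  simp [Finsupp.add_apply, Finsupp.single_eq_of_ne' h]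

lemma sub_single_self (a : Fin n) (α : Fin n →₀ ℕ) :
    ((α - Finsupp.single a 1 : Fin n →₀ ℕ)) a = α a - 1 := by
  simp [sub_single_apply]

lemma sub_single_ne {a b : Fin n} (h : a ≠ b) (α : Fin n →₀ ℕ) :
    ((α - Finsupp.single b 1 : Fin n →₀ ℕ)) a = α a := by
  simp [sub_single_apply, Finsupp.single_eq_of_ne' (Ne.symm h)]

lemma mulXc_apply_pos {k : Fin n} {α : Fin n →₀ ℕ} (c : (Fin n →₀ ℕ) → S) (h : α k ≠ 0) :
    mulXc k c α = c (α - Finsupp.single k 1) := if_neg h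

lemma mulXc_apply_zero {k : Fin n} {α : Fin n →₀ ℕ} (c : (Fin n →₀ ℕ) → S) (h : α k = 0) :
    mulXc k c α = 0 := if_pos h

lemma pderivc_apply (k : Fin n) (c : (Fin n →₀ ℕ) → S) (α : Fin n →₀ ℕ) :
    pderivc k c α = (α k + 1) • c (α + Finsupp.single k 1) := rfl

lemma add_sub_single_comm {a b : Fin n} (h : a ≠ b) (α : Fin n →₀ ℕ) :
    α + Finsupp.single a 1 - Finsupp.single b 1
      = α - Finsupp.single b 1 + Finsupp.single a 1 := by
  ext x
  simp only [Finsupp.add_apply, sub_single_apply, Finsupp.single_apply]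
  by_cases hax : a = x
  · by_cases hbx : b = x
    · exact absurd (hax.trans hbx.symm) h
    · rw [if_pos hax, if_neg hbx]; omega
  · by_cases hbx : b = x
    · rw [if_neg hax, if_pos hbx]; omega
    · rw [if_neg hax, if_neg hbx]; omega

lemma sub_sub_single_comm (a b : Fin n) (α : Fin n →₀ ℕ) :
    α - Finsupp.single a 1 - Finsupp.single b 1
      = α - Finsupp.single b 1 - Finsupp.single a 1 := by
  ext x
  simp only [sub_single_apply]
  omega

lemma pderiv_mulX (a b : Fin n) (c : (Fin n →₀ ℕ) → S) :
    pderivc a (mulXc b c) = mulXc b (pderivc a c) + fun α => (if a = b then c α else 0) := by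
  funext α
  rw [Pi.add_apply, pderivc_apply]
  by_cases hab : a = b
  · subst hab
    rw [if_pos rfl,
      mulXc_apply_pos c (show ((α + Finsupp.single a 1 : Fin n →₀ ℕ)) a ≠ 0 by
        rw [add_single_self]; omega),
      add_sub_single]
    by_cases h : α a = 0
    · rw [mulXc_apply_zero _ h, h, zero_add, one_smul, zero_add]
    · rw [mulXc_apply_pos _ h, pderivc_apply, sub_single_self, sub_add_single h]
      have : α a - 1 + 1 = α a := Nat.succ_pred_eq_of_pos (Nat.pos_of_ne_zero h)
      rw [this, succ_nsmul]
  · rw [if_neg hab, add_zero]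
    by_cases h : α b = 0
    · rw [mulXc_apply_zero _ h,
        mulXc_apply_zero c (show ((α + Finsupp.single a 1 : Fin n →₀ ℕ)) b = 0 by
          rw [add_single_ne hab]; exact h),
        smul_zero]
    · rw [mulXc_apply_pos _ h,
        mulXc_apply_pos c (show ((α + Finsupp.single a 1 : Fin n →₀ ℕ)) b ≠ 0 by
          rw [add_single_ne hab]; exact h),
        pderivc_apply, sub_single_ne hab, add_sub_single_comm hab]

lemma mulX_comm (a b : Fin n) (c : (Fin n →₀ ℕ) → S) :
    mulXc a (mulXc b c) = mulXc b (mulXc a c) := by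
  rcases eq_or_ne a b with rfl | hab
  · rfl
  funext α
  by_cases ha : α a = 0 <;> by_cases hb : α b = 0
  · rw [mulXc_apply_zero _ ha, mulXc_apply_zero _ hb]
  · rw [mulXc_apply_zero _ ha, mulXc_apply_pos _ hb,
      mulXc_apply_zero c (show ((α - Finsupp.single b 1 : Fin n →₀ ℕ)) a = 0 by
        rw [sub_single_ne hab]; exact ha)]
  · rw [mulXc_apply_pos _ ha, mulXc_apply_zero _ hb,
      mulXc_apply_zero c (show ((α - Finsupp.single a 1 : Fin n →₀ ℕ)) b = 0 by
        rw [sub_single_ne (Ne.symm hab)]; exact hb)]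
  · rw [mulXc_apply_pos _ ha, mulXc_apply_pos _ hb,
      mulXc_apply_pos c (show ((α - Finsupp.single a 1 : Fin n →₀ ℕ)) b ≠ 0 by
        rw [sub_single_ne (Ne.symm hab)]; exact hb),
      mulXc_apply_pos c (show ((α - Finsupp.single b 1 : Fin n →₀ ℕ)) a ≠ 0 by
        rw [sub_single_ne hab]; exact ha),
      sub_sub_single_comm]

lemma applyE_mulX (T : S →ₗ[ℂ] S) (k : Fin n) (c : (Fin n →₀ ℕ) → S) :
    applyEc T (mulXc k c) = mulXc k (applyEc T c) := by
  funext α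
  show T (mulXc k c α) = mulXc k (applyEc T c) α
  by_cases h : α k = 0
  · rw [mulXc_apply_zero _ h, mulXc_apply_zero _ h, map_zero]
  · rw [mulXc_apply_pos _ h, mulXc_apply_pos _ h]; rfl

lemma applyE_pderiv (T : S →ₗ[ℂ] S) (k : Fin n) (c : (Fin n →₀ ℕ) → S) :
    applyEc T (pderivc k c) = pderivc k (applyEc T c) := by
  funext α
  show T ((α k + 1) • c (α + Finsupp.single k 1)) = (α k + 1) • T (c (α + Finsupp.single k 1))
  rw [map_nsmul]

lemma pderiv_pderiv (a b : Fin n) (c : (Fin n →₀ ℕ) → S) :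
    pderivc a (pderivc b c) = pderivc b (pderivc a c) := by
  funext α
  rw [pderivc_apply, pderivc_apply, pderivc_apply, pderivc_apply,
    add_right_comm α (Finsupp.single a 1), smul_smul, smul_smul]
  rcases eq_or_ne a b with rfl | hab
  · rfl
  · rw [add_single_ne hab, add_single_ne (Ne.symm hab)]
    ring_nf

end Comm
section Dirac
variable {n : ℕ} [AddCommGroup S] [Module ℂ S] {E : Fin n → S →ₗ[ℂ] S}

lemma cl_apply (hCl : ∀ a b : Fin n, E a ∘ₗ E b + E b ∘ₗ E a
      = if a = b then (-2 : ℂ) • (LinearMap.id : S →ₗ[ℂ] S) else 0) (a b : Fin n) (v : S) :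
    E a (E b v) + E b (E a v) = if a = b then (-2:ℂ) • v else 0 := by
  have h := congrArg (fun T : S →ₗ[ℂ] S => T v) (hCl a b)
  simp only [LinearMap.add_apply, LinearMap.comp_apply] at h
  rw [h]
  split <;> simp

lemma EE_swap (hCl : ∀ a b : Fin n, E a ∘ₗ E b + E b ∘ₗ E a
      = if a = b then (-2 : ℂ) • (LinearMap.id : S →ₗ[ℂ] S) else 0) {a b : Fin n} (v : S) :
    E a (E b v) = (if a = b then (-2:ℂ) • v else 0) - E b (E a v) :=
  eq_sub_of_add_eq (cl_apply hCl a b v)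

lemma smul_cancel {r : ℂ} (hr : r ≠ 0) {v w : (Fin n →₀ ℕ) → S} (h : r • v = r • w) : v = w := by
  have h2 := congrArg (fun u : (Fin n →₀ ℕ) → S => r⁻¹ • u) h
  simpa [smul_smul, inv_mul_cancel₀ hr] using h2

lemma EE_self (hCl : ∀ a b : Fin n, E a ∘ₗ E b + E b ∘ₗ E a
      = if a = b then (-2 : ℂ) • (LinearMap.id : S →ₗ[ℂ] S) else 0) (a : Fin n) (v : S) :
    E a (E a v) = -v := by
  have h := cl_apply hCl a a v
  rw [if_pos rfl] at h
  have h2 : (2:ℂ) • (E a (E a v)) = (2:ℂ) • (-v) := by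
    rw [two_smul]
    rw [h]
    simp [neg_smul, two_smul]
  have h3 := congrArg (fun u : S => (2:ℂ)⁻¹ • u) h2
  simpa [smul_smul] using h3

lemma map_mulXc_apply (T : S →ₗ[ℂ] S) (k : Fin n) (f : (Fin n →₀ ℕ) → S) (α : Fin n →₀ ℕ) :
    T (mulXc k f α) = mulXc k (fun β => T (f β)) α := by
  by_cases h : α k = 0
  · rw [mulXc_apply_zero _ h, mulXc_apply_zero _ h, map_zero]
  · rw [mulXc_apply_pos _ h, mulXc_apply_pos _ h]

lemma mulXc_sum_apply {ι : Type*} (s : Finset ι) (f : ι → (Fin n →₀ ℕ) → S) (k : Fin n)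
    (α : Fin n →₀ ℕ) :
    ∑ i ∈ s, mulXc k (f i) α = mulXc k (fun β => ∑ i ∈ s, f i β) α := by
  by_cases h : α k = 0
  · simp [mulXc_apply_zero _ h]
  · simp [mulXc_apply_pos _ h]

lemma pderivc_sum_apply {ι : Type*} (s : Finset ι) (f : ι → (Fin n →₀ ℕ) → S) (k : Fin n)
    (α : Fin n →₀ ℕ) :
    pderivc k (fun β => ∑ i ∈ s, f i β) α = ∑ i ∈ s, pderivc k (f i) α := by
  simp [pderivc_apply, Finset.smul_sum]

lemma euler_apply (c : (Fin n →₀ ℕ) → S) (α : Fin n →₀ ℕ) :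
    (∑ a, mulXc a (pderivc a c) α) = (∑ a, α a) • c α := by
  rw [Finset.sum_smul]
  refine Finset.sum_congr rfl fun a _ => ?_
  by_cases h : α a = 0
  · rw [mulXc_apply_zero _ h, h, zero_smul]
  · rw [mulXc_apply_pos _ h, pderivc_apply, sub_single_self, sub_add_single h]
    have : α a - 1 + 1 = α a := Nat.succ_pred_eq_of_pos (Nat.pos_of_ne_zero h)
    rw [this]

lemma dirac_mulX (k : Fin n) (c : (Fin n →₀ ℕ) → S) :
    diracc E (mulXc k c) = applyEc (E k) c + mulXc k (diracc E c) := by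
  funext α
  show (∑ a, E a (pderivc a (mulXc k c) α)) = E k (c α) + mulXc k (diracc E c) α
  have h1 : ∀ a : Fin n, E a (pderivc a (mulXc k c) α)
      = E a (mulXc k (pderivc a c) α) + (if a = k then E k (c α) else 0) := by
    intro a
    rw [pderiv_mulX, Pi.add_apply, map_add]
    congr 1
    rcases eq_or_ne a k with rfl | h
    · rw [if_pos rfl, if_pos rfl]
    · rw [if_neg h, if_neg h, map_zero]
  rw [Finset.sum_congr rfl fun a _ => h1 a, Finset.sum_add_distrib, Finset.sum_ite_eq']
  simp only [Finset.mem_univ, if_pos]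
  rw [add_comm]
  congr 1
  calc (∑ a, E a (mulXc k (pderivc a c) α))
      = ∑ a, mulXc k (fun β => E a (pderivc a c β)) α := by
        exact Finset.sum_congr rfl fun a _ => map_mulXc_apply _ _ _ _
    _ = mulXc k (fun β => ∑ a, E a (pderivc a c β)) α := mulXc_sum_apply _ _ _ _
    _ = mulXc k (diracc E c) α := rfl

lemma dirac_applyE (hCl : ∀ a b : Fin n, E a ∘ₗ E b + E b ∘ₗ E a
      = if a = b then (-2 : ℂ) • (LinearMap.id : S →ₗ[ℂ] S) else 0)
    (k : Fin n) (c : (Fin n →₀ ℕ) → S) :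
    diracc E (applyEc (E k) c) = (-2:ℂ) • pderivc k c - applyEc (E k) (diracc E c) := by
  funext α
  show (∑ a, E a (pderivc a (applyEc (E k) c) α))
    = (-2:ℂ) • pderivc k c α - E k (diracc E c α)
  have h1 : ∀ a : Fin n, pderivc a (applyEc (E k) c) α = E k (pderivc a c α) := by
    intro a
    rw [← applyE_pderiv]
    rfl
  have h2 : ∀ a : Fin n, E a (E k (pderivc a c α))
      = (if a = k then (-2:ℂ) • pderivc a c α else 0) - E k (E a (pderivc a c α)) :=
    fun a => EE_swap hCl _
  rw [Finset.sum_congr rfl fun a _ => (h1 a) ▸ (h2 a), Finset.sum_sub_distrib,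
    Finset.sum_ite_eq']
  simp only [Finset.mem_univ, if_pos]
  congr 1
  show (∑ a, E k (E a (pderivc a c α))) = E k (∑ a, E a (pderivc a c α))
  rw [map_sum]

lemma dirac_xUnder (hCl : ∀ a b : Fin n, E a ∘ₗ E b + E b ∘ₗ E a
      = if a = b then (-2 : ℂ) • (LinearMap.id : S →ₗ[ℂ] S) else 0)
    (c : (Fin n →₀ ℕ) → S) :
    diracc E (xUnderc E c)
      = (fun α => (n:ℕ) • (-(c α)) + (-2:ℂ) • ((∑ a, α a) • c α)) - xUnderc E (diracc E c) := by
  funext α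
  show (∑ a, E a (pderivc a (xUnderc E c) α))
    = ((n:ℕ) • (-(c α)) + (-2:ℂ) • ((∑ a, α a) • c α)) - xUnderc E (diracc E c) α
  have h1 : ∀ a : Fin n, pderivc a (xUnderc E c) α
      = ∑ b, (mulXc b (applyEc (E b) (pderivc a c)) α + (if a = b then E b (c α) else 0)) := by
    intro a
    have : pderivc a (xUnderc E c) α
        = ∑ b, pderivc a (mulXc b (applyEc (E b) c)) α := pderivc_sum_apply _ _ _ _
    rw [this]
    refine Finset.sum_congr rfl fun b _ => ?_
    rw [pderiv_mulX, Pi.add_apply, applyE_pderiv]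
    rfl
  have hsplit : (∑ a, E a (pderivc a (xUnderc E c) α))
      = (∑ a, ∑ b, E a (mulXc b (applyEc (E b) (pderivc a c)) α))
        + ∑ a : Fin n, E a (E a (c α)) := by
    rw [← Finset.sum_add_distrib]
    refine Finset.sum_congr rfl fun a _ => ?_
    rw [h1 a, map_sum]
    have hb : ∀ b : Fin n,
        E a (mulXc b (applyEc (E b) (pderivc a c)) α + (if a = b then E b (c α) else 0))
        = E a (mulXc b (applyEc (E b) (pderivc a c)) α)
          + (if a = b then E a (E b (c α)) else 0) := by
      intro b
      rw [map_add]
      congr 1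
      rcases eq_or_ne a b with rfl | h
      · rw [if_pos rfl, if_pos rfl]
      · rw [if_neg h, if_neg h, map_zero]
    rw [Finset.sum_congr rfl fun b _ => hb b, Finset.sum_add_distrib, Finset.sum_ite_eq]
    simp only [Finset.mem_univ, if_pos]
  rw [hsplit]
  have hdiag : (∑ a : Fin n, E a (E a (c α))) = (n:ℕ) • (-(c α)) := by
    rw [Finset.sum_congr rfl fun a _ => EE_self hCl a (c α), Finset.sum_const,
      Finset.card_univ, Fintype.card_fin]
  have hoff : (∑ a, ∑ b, E a (mulXc b (applyEc (E b) (pderivc a c)) α))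
      = (-2:ℂ) • ((∑ a, α a) • c α) - xUnderc E (diracc E c) α := by
    rw [Finset.sum_comm]
    have hb : ∀ b : Fin n, (∑ a, E a (mulXc b (applyEc (E b) (pderivc a c)) α))
        = (-2:ℂ) • mulXc b (pderivc b c) α - mulXc b (applyEc (E b) (diracc E c)) α := by
      intro b
      calc (∑ a, E a (mulXc b (applyEc (E b) (pderivc a c)) α))
          = ∑ a, mulXc b (fun β => E a (E b (pderivc a c β))) α :=
            Finset.sum_congr rfl fun a _ => map_mulXc_apply _ _ _ _
        _ = mulXc b (fun β => ∑ a, E a (E b (pderivc a c β))) α := mulXc_sum_apply _ _ _ _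
        _ = mulXc b (fun β => (-2:ℂ) • pderivc b c β - E b (diracc E c β)) α := by
            congr 1
            funext β
            rw [Finset.sum_congr rfl fun a _ => EE_swap hCl (pderivc a c β),
              Finset.sum_sub_distrib, Finset.sum_ite_eq']
            simp only [Finset.mem_univ, if_pos]
            rw [← map_sum]
            rfl
        _ = (-2:ℂ) • mulXc b (pderivc b c) α - mulXc b (applyEc (E b) (diracc E c)) α := by
            have : (fun β => (-2:ℂ) • pderivc b c β - E b (diracc E c β))
                = (-2:ℂ) • pderivc b c - applyEc (E b) (diracc E c) := rfl
            rw [this, mulXc_sub, mulXc_smul]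
            rfl
    rw [Finset.sum_congr rfl fun b _ => hb b, Finset.sum_sub_distrib, ← Finset.smul_sum,
      euler_apply]
    rfl
  rw [hdiag, hoff]
  abel

lemma dirac_normSq (c : (Fin n →₀ ℕ) → S) :
    diracc E (normSqMulc c) = xUnderc E c + xUnderc E c + normSqMulc (diracc E c) := by
  funext α
  show (∑ a, E a (pderivc a (normSqMulc c) α))
    = (xUnderc E c α + xUnderc E c α) + normSqMulc (diracc E c) α
  have key : ∀ a b : Fin n, pderivc a (mulXc b (mulXc b c)) α
      = mulXc b (mulXc b (pderivc a c)) α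
        + ((if a = b then mulXc b c α else 0) + (if a = b then mulXc b c α else 0)) := by
    intro a b
    rw [pderiv_mulX, Pi.add_apply, pderiv_mulX, mulXc_add, Pi.add_apply]
    rcases eq_or_ne a b with rfl | h
    · have hfun : (fun γ => if a = a then c γ else 0) = c := by
        funext γ; rw [if_pos rfl]
      rw [hfun, if_pos rfl]
      exact add_assoc (mulXc a (mulXc a (pderivc a c)) α) (mulXc a c α) (mulXc a c α)
    · have hfun : (fun γ => if a = b then c γ else 0) = (0 : (Fin n →₀ ℕ) → S) := by
        funext γ
        rw [if_neg h]
        rfl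
      rw [hfun, mulXc_zero]
      simp [h]
  have h1 : ∀ a : Fin n, E a (pderivc a (normSqMulc c) α)
      = (∑ b, E a (mulXc b (mulXc b (pderivc a c)) α))
        + (E a (mulXc a c α) + E a (mulXc a c α)) := by
    intro a
    have hsum : pderivc a (normSqMulc c) α
        = ∑ b, pderivc a (mulXc b (mulXc b c)) α := pderivc_sum_apply _ _ _ _
    rw [hsum, map_sum, Finset.sum_congr rfl fun b _ => congrArg (E a) (key a b)]
    have hsplit : ∀ b : Fin n, E a (mulXc b (mulXc b (pderivc a c)) α
          + ((if a = b then mulXc b c α else 0) + (if a = b then mulXc b c α else 0)))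
        = E a (mulXc b (mulXc b (pderivc a c)) α)
          + ((if a = b then E a (mulXc b c α) else 0) + (if a = b then E a (mulXc b c α) else 0)) := by
      intro b
      rcases eq_or_ne a b with rfl | h
      · simp
      · simp [h]
    rw [Finset.sum_congr rfl fun b _ => hsplit b, Finset.sum_add_distrib,
      Finset.sum_add_distrib, Finset.sum_ite_eq]
    simp only [Finset.mem_univ, if_pos]
  rw [Finset.sum_congr rfl fun a _ => h1 a, Finset.sum_add_distrib, Finset.sum_add_distrib]
  have hdiag : (∑ a, E a (mulXc a c α)) = xUnderc E c α := by
    rw [Finset.sum_congr rfl fun a _ => map_mulXc_apply (E a) a c α]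
    rfl
  have hmain : (∑ a, ∑ b, E a (mulXc b (mulXc b (pderivc a c)) α))
      = normSqMulc (diracc E c) α := by
    rw [Finset.sum_comm]
    have hb : ∀ b : Fin n, (∑ a, E a (mulXc b (mulXc b (pderivc a c)) α))
        = mulXc b (mulXc b (fun γ => ∑ a, E a (pderivc a c γ))) α := by
      intro b
      calc (∑ a, E a (mulXc b (mulXc b (pderivc a c)) α))
          = ∑ a, mulXc b (fun β => E a (mulXc b (pderivc a c) β)) α :=
            Finset.sum_congr rfl fun a _ => map_mulXc_apply _ _ _ _
        _ = ∑ a, mulXc b (mulXc b (fun γ => E a (pderivc a c γ))) α := by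
            refine Finset.sum_congr rfl fun a _ => ?_
            congr 1
            funext β
            exact map_mulXc_apply _ _ _ _
        _ = mulXc b (fun β => ∑ a, mulXc b (fun γ => E a (pderivc a c γ)) β) α :=
            mulXc_sum_apply _ _ _ _
        _ = mulXc b (mulXc b (fun γ => ∑ a, E a (pderivc a c γ))) α := by
            congr 1
            funext β
            exact mulXc_sum_apply _ _ _ _
    rw [Finset.sum_congr rfl fun b _ => hb b]
    rfl
  rw [hdiag, hmain]
  abel

lemma xUnder_xUnder (hCl : ∀ a b : Fin n, E a ∘ₗ E b + E b ∘ₗ E a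
      = if a = b then (-2 : ℂ) • (LinearMap.id : S →ₗ[ℂ] S) else 0)
    (c : (Fin n →₀ ℕ) → S) :
    xUnderc E (xUnderc E c) = - normSqMulc c := by
  apply smul_cancel (two_ne_zero (α := ℂ))
  funext α
  rw [Pi.smul_apply, Pi.smul_apply, Pi.neg_apply, two_smul, two_smul]
  have hexp : xUnderc E (xUnderc E c) α
      = ∑ a, ∑ b, mulXc a (mulXc b (fun γ => E a (E b (c γ)))) α := by
    show (∑ a, mulXc a (applyEc (E a) (xUnderc E c)) α) = _
    refine Finset.sum_congr rfl fun a _ => ?_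
    have h : applyEc (E a) (xUnderc E c)
        = fun β => ∑ b, mulXc b (fun γ => E a (E b (c γ))) β := by
      funext β
      show E a (∑ b, mulXc b (applyEc (E b) c) β) = _
      rw [map_sum]
      exact Finset.sum_congr rfl fun b _ => map_mulXc_apply _ _ _ _
    rw [h, ← mulXc_sum_apply]
  rw [hexp]
  have step : ∀ a b : Fin n, mulXc a (mulXc b (fun γ => E a (E b (c γ)))) α
      + mulXc b (mulXc a (fun γ => E b (E a (c γ)))) α
      = if a = b then (-2:ℂ) • (mulXc a (mulXc a c) α) else 0 := by
    intro a b
    rw [mulX_comm b a]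
    have h1 : mulXc a (mulXc b (fun γ => E a (E b (c γ)))) α
        + mulXc a (mulXc b (fun γ => E b (E a (c γ)))) α
        = mulXc a (mulXc b ((fun γ => E a (E b (c γ))) + fun γ => E b (E a (c γ)))) α := by
      rw [mulXc_add, mulXc_add]
      rfl
    rw [h1]
    have h2 : ((fun γ => E a (E b (c γ))) + fun γ => E b (E a (c γ)))
        = fun γ => (if a = b then (-2:ℂ) • c γ else 0) := by
      funext γ
      exact cl_apply hCl a b (c γ)
    rw [h2]
    rcases eq_or_ne a b with rfl | h
    · rw [if_pos rfl]
      have h3 : (fun γ => if a = a then (-2:ℂ) • c γ else 0) = (-2:ℂ) • c := by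
        funext γ; rw [if_pos rfl]; rfl
      rw [h3, mulXc_smul, mulXc_smul]
      rfl
    · rw [if_neg h]
      have h3 : (fun γ => if a = b then (-2:ℂ) • c γ else 0) = (0 : (Fin n →₀ ℕ) → S) := by
        funext γ
        rw [if_neg h]
        rfl
      rw [h3, mulXc_zero, mulXc_zero]
      rfl
  have hcomm : (∑ a, ∑ b, mulXc a (mulXc b (fun γ => E a (E b (c γ)))) α)
      = ∑ a, ∑ b, mulXc b (mulXc a (fun γ => E b (E a (c γ)))) α := Finset.sum_comm
  nth_rewrite 2 [hcomm]
  rw [← Finset.sum_add_distrib]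
  rw [Finset.sum_congr rfl fun a _ => (Finset.sum_add_distrib (s := Finset.univ)).symm]
  rw [Finset.sum_congr rfl fun a _ => Finset.sum_congr rfl fun b _ => step a b]
  rw [Finset.sum_congr rfl fun a _ =>
    Finset.sum_ite_eq Finset.univ a (fun b => (-2:ℂ) • (mulXc a (mulXc a c) α))]
  simp only [Finset.mem_univ, if_pos]
  rw [← Finset.smul_sum]
  have : (∑ a, mulXc a (mulXc a c) α) = normSqMulc c α := rfl
  rw [this, neg_smul, two_smul, neg_add]

end Dirac
section HomogFin
variable {n : ℕ} [AddCommGroup S] [Module ℂ S] {E : Fin n → S →ₗ[ℂ] S}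

lemma sum_add_single (k : Fin n) (α : Fin n →₀ ℕ) :
    (∑ a, ((α + Finsupp.single k 1 : Fin n →₀ ℕ)) a) = (∑ a, α a) + 1 := by
  have h1 : ∀ a : Fin n, ((α + Finsupp.single k 1 : Fin n →₀ ℕ)) a
      = α a + (if k = a then 1 else 0) := by
    intro a
    rw [Finsupp.add_apply, Finsupp.single_apply]
  rw [Finset.sum_congr rfl fun a _ => h1 a, Finset.sum_add_distrib, Finset.sum_ite_eq]
  simp

lemma isHomog_mulX {i : ℕ} {c : (Fin n →₀ ℕ) → S} (h : IsHomogC i c) (k : Fin n) :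
    IsHomogC (i + 1) (mulXc k c) := by
  intro α hα
  by_cases hk : α k = 0
  · exact absurd (mulXc_apply_zero c hk) hα
  · rw [mulXc_apply_pos c hk] at hα
    have hd := h _ hα
    have h2 : (∑ a, α a) = (∑ a, ((α - Finsupp.single k 1 : Fin n →₀ ℕ)) a) + 1 := by
      conv_lhs => rw [← sub_add_single hk]
      exact sum_add_single k _
    omega

lemma isHomog_pderiv {i : ℕ} {c : (Fin n →₀ ℕ) → S} (h : IsHomogC i c) (k : Fin n) :
    IsHomogC (i - 1) (pderivc k c) := by
  intro α hα
  rw [pderivc_apply] at hα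
  have hc : c (α + Finsupp.single k 1) ≠ 0 := by
    intro h0
    rw [h0, smul_zero] at hα
    exact hα rfl
  have hd := h _ hc
  rw [sum_add_single] at hd
  omega

lemma isHomog_applyE {i : ℕ} {c : (Fin n →₀ ℕ) → S} (T : S →ₗ[ℂ] S) (h : IsHomogC i c) :
    IsHomogC i (applyEc T c) := by
  intro α hα
  refine h α fun h0 => hα ?_
  show T (c α) = 0
  rw [h0, map_zero]

lemma isHomog_smul {i : ℕ} {c : (Fin n →₀ ℕ) → S} (r : ℂ) (h : IsHomogC i c) :
    IsHomogC i (r • c) := by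
  intro α hα
  refine h α fun h0 => hα ?_
  show r • c α = 0
  rw [h0, smul_zero]

lemma isHomog_add {i : ℕ} {f g : (Fin n →₀ ℕ) → S} (hf : IsHomogC i f) (hg : IsHomogC i g) :
    IsHomogC i (f + g) := by
  intro α hα
  by_cases h0 : f α = 0
  · refine hg α fun hg0 => hα ?_
    show f α + g α = 0
    rw [h0, hg0, add_zero]
  · exact hf α h0

lemma isHomog_sub {i : ℕ} {f g : (Fin n →₀ ℕ) → S} (hf : IsHomogC i f) (hg : IsHomogC i g) :
    IsHomogC i (f - g) := by
  intro α hα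
  by_cases h0 : f α = 0
  · refine hg α fun hg0 => hα ?_
    show f α - g α = 0
    rw [h0, hg0, sub_zero]
  · exact hf α h0

lemma isHomog_xUnder {i : ℕ} {c : (Fin n →₀ ℕ) → S} (h : IsHomogC i c) :
    IsHomogC (i + 1) (xUnderc E c) := by
  intro α hα
  have hex : ∃ a : Fin n, mulXc a (applyEc (E a) c) α ≠ 0 := by
    by_contra hno
    push_neg at hno
    exact hα (Finset.sum_eq_zero fun a _ => hno a)
  obtain ⟨a, ha⟩ := hex
  exact isHomog_mulX (isHomog_applyE (E a) h) a α ha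

lemma isHomog_normSq {i : ℕ} {c : (Fin n →₀ ℕ) → S} (h : IsHomogC i c) :
    IsHomogC (i + 2) (normSqMulc c) := by
  intro α hα
  have hex : ∃ a : Fin n, mulXc a (mulXc a c) α ≠ 0 := by
    by_contra hno
    push_neg at hno
    exact hα (Finset.sum_eq_zero fun a _ => hno a)
  obtain ⟨a, ha⟩ := hex
  exact isHomog_mulX (isHomog_mulX h a) a α ha

lemma finite_mulX {c : (Fin n →₀ ℕ) → S} (h : (Function.support c).Finite) (k : Fin n) :
    (Function.support (mulXc k c)).Finite := by
  apply Set.Finite.subset (h.image (fun α => α + Finsupp.single k 1))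
  intro α hα
  by_cases hk : α k = 0
  · exact absurd (mulXc_apply_zero c hk) hα
  · rw [Function.mem_support, mulXc_apply_pos c hk] at hα
    exact ⟨α - Finsupp.single k 1, hα, sub_add_single hk⟩

lemma finite_pderiv {c : (Fin n →₀ ℕ) → S} (h : (Function.support c).Finite) (k : Fin n) :
    (Function.support (pderivc k c)).Finite := by
  have hinj : Function.Injective (fun α : Fin n →₀ ℕ => α + Finsupp.single k 1) :=
    fun a b hab => by simpa using hab
  apply Set.Finite.subset (h.preimage hinj.injOn)
  intro α hα
  rw [Function.mem_support, pderivc_apply] at hα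
  have : c (α + Finsupp.single k 1) ≠ 0 := by
    intro h0
    rw [h0, smul_zero] at hα
    exact hα rfl
  exact this

lemma finite_applyE {c : (Fin n →₀ ℕ) → S} (T : S →ₗ[ℂ] S) (h : (Function.support c).Finite) :
    (Function.support (applyEc T c)).Finite := by
  apply Set.Finite.subset h
  intro α hα
  rw [Function.mem_support] at hα ⊢
  intro h0
  refine hα ?_
  show T (c α) = 0
  rw [h0, map_zero]

lemma finite_smul {c : (Fin n →₀ ℕ) → S} (r : ℂ) (h : (Function.support c).Finite) :
    (Function.support (r • c)).Finite := by
  apply Set.Finite.subset h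
  intro α hα
  rw [Function.mem_support] at hα ⊢
  intro h0
  refine hα ?_
  show r • c α = 0
  rw [h0, smul_zero]

lemma finite_add {f g : (Fin n →₀ ℕ) → S} (hf : (Function.support f).Finite)
    (hg : (Function.support g).Finite) : (Function.support (f + g)).Finite :=
  (hf.union hg).subset (Function.support_add f g)

lemma finite_sub {f g : (Fin n →₀ ℕ) → S} (hf : (Function.support f).Finite)
    (hg : (Function.support g).Finite) : (Function.support (f - g)).Finite := by
  apply Set.Finite.subset (hf.union hg)
  intro α hα
  rw [Function.mem_support] at hα
  by_cases h0 : f α = 0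
  · right
    rw [Function.mem_support]
    intro hg0
    refine hα ?_
    show f α - g α = 0
    rw [h0, hg0, sub_zero]
  · exact Or.inl h0

lemma finite_xUnder {c : (Fin n →₀ ℕ) → S} (h : (Function.support c).Finite) :
    (Function.support (xUnderc E c)).Finite := by
  apply Set.Finite.subset
    (Set.finite_iUnion (fun a : Fin n => finite_mulX (finite_applyE (E a) h) a))
  intro α hα
  rw [Function.mem_support] at hα
  have hex : ∃ a : Fin n, mulXc a (applyEc (E a) c) α ≠ 0 := by
    by_contra hno
    push_neg at hno
    exact hα (Finset.sum_eq_zero fun a _ => hno a)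
  obtain ⟨a, ha⟩ := hex
  exact Set.mem_iUnion.2 ⟨a, ha⟩

lemma finite_normSq {c : (Fin n →₀ ℕ) → S} (h : (Function.support c).Finite) :
    (Function.support (normSqMulc c)).Finite := by
  apply Set.Finite.subset
    (Set.finite_iUnion (fun a : Fin n => finite_mulX (finite_mulX h a) a))
  intro α hα
  rw [Function.mem_support] at hα
  have hex : ∃ a : Fin n, mulXc a (mulXc a c) α ≠ 0 := by
    by_contra hno
    push_neg at hno
    exact hα (Finset.sum_eq_zero fun a _ => hno a)
  obtain ⟨a, ha⟩ := hex
  exact Set.mem_iUnion.2 ⟨a, ha⟩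

end HomogFin
section Spec
variable {n : ℕ} [AddCommGroup S] [Module ℂ S] {E : Fin n → S →ₗ[ℂ] S}

lemma diracc_zero : diracc E (0 : (Fin n →₀ ℕ) → S) = 0 := by
  funext α
  show (∑ a, E a (pderivc a (0 : (Fin n →₀ ℕ) → S) α)) = 0
  refine Finset.sum_eq_zero fun a _ => ?_
  have h : pderivc a (0 : (Fin n →₀ ℕ) → S) α = 0 := smul_zero _
  rw [h, map_zero]

lemma isHomog_zero (j : ℕ) : IsHomogC j (0 : (Fin n →₀ ℕ) → S) :=
  fun _ h => absurd rfl h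

lemma finite_zero : (Function.support (0 : (Fin n →₀ ℕ) → S)).Finite := by
  simp

lemma dirac_pderiv (k : Fin n) (c : (Fin n →₀ ℕ) → S) :
    diracc E (pderivc k c) = pderivc k (diracc E c) := by
  funext α
  show (∑ a, E a (pderivc a (pderivc k c) α))
    = (α k + 1) • ∑ a, E a (pderivc a c (α + Finsupp.single k 1))
  rw [Finset.smul_sum]
  refine Finset.sum_congr rfl fun a _ => ?_
  rw [pderiv_pderiv a k]
  show E a ((α k + 1) • pderivc a c (α + Finsupp.single k 1))
    = (α k + 1) • E a (pderivc a c (α + Finsupp.single k 1))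
  rw [map_nsmul]

lemma pderiv_homog_zero {c : (Fin n →₀ ℕ) → S} (h : IsHomogC 0 c) (k : Fin n) :
    pderivc k c = 0 := by
  funext α
  show (α k + 1) • c (α + Finsupp.single k 1) = 0
  have hc : c (α + Finsupp.single k 1) = 0 := by
    by_contra h0
    have := h _ h0
    rw [sum_add_single] at this
    omega
  rw [hc, smul_zero]

lemma dirac_xUnder_homog (hCl : ∀ a b : Fin n, E a ∘ₗ E b + E b ∘ₗ E a
      = if a = b then (-2 : ℂ) • (LinearMap.id : S →ₗ[ℂ] S) else 0)
    {i : ℕ} {c : (Fin n →₀ ℕ) → S} (h : IsHomogC i c) :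
    diracc E (xUnderc E c) = (-(n:ℂ) - 2*i) • c - xUnderc E (diracc E c) := by
  rw [dirac_xUnder hCl]
  congr 1
  funext α
  show (n:ℕ) • (-(c α)) + (-2:ℂ) • ((∑ a, α a) • c α) = (-(n:ℂ) - 2*i) • c α
  by_cases h0 : c α = 0
  · rw [h0]
    simp
  · rw [h α h0, ← Nat.cast_smul_eq_nsmul ℂ n (-(c α)), ← Nat.cast_smul_eq_nsmul ℂ i (c α)]
    module

end Spec

theorem statement4 {n : ℕ} (hn : 1 ≤ n) [AddCommGroup S] [Module ℂ S]
    (E : Fin n → S →ₗ[ℂ] S)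
    (hCl : ∀ a b : Fin n, E a ∘ₗ E b + E b ∘ₗ E a
      = if a = b then (-2 : ℂ) • (LinearMap.id : S →ₗ[ℂ] S) else 0)
    (i : ℕ) (c : (Fin n →₀ ℕ) → S)
    (hfin : (Function.support c).Finite)
    (hhom : IsHomogC i c)
    (hmono : diracc E c = 0)
    (k : Fin n)
    (hcoef : (n : ℂ) + 2 * i - 2 ≠ 0) :
    ((Function.support (compPlusC E i k c)).Finite
        ∧ IsHomogC (i + 1) (compPlusC E i k c)
        ∧ diracc E (compPlusC E i k c) = 0)
    ∧ ((Function.support (compZeroC E i k c)).Finite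
        ∧ IsHomogC i (compZeroC E i k c)
        ∧ diracc E (compZeroC E i k c) = 0)
    ∧ ((Function.support (compMinusC i k c)).Finite
        ∧ IsHomogC (i - 1) (compMinusC i k c)
        ∧ diracc E (compMinusC i k c) = 0)
    ∧ mulXc k c
        = compPlusC E i k c - xUnderc E (compZeroC E i k c) + normSqMulc (compMinusC i k c) := by
  have h2i : ((n + 2 * i : ℕ) : ℂ) ≠ 0 := Nat.cast_ne_zero.mpr (by omega)
  have hA : ((n : ℂ) + 2 * i) ≠ 0 := by push_cast at h2i; exact h2i
  have hDp : diracc E (pderivc k c) = 0 := by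
    rw [dirac_pderiv, hmono, pderivc_zero]
  have hhp : IsHomogC (i - 1) (pderivc k c) := isHomog_pderiv hhom k
  have hDE : diracc E (applyEc (E k) c) = (-2:ℂ) • pderivc k c := by
    rw [dirac_applyE hCl, hmono, applyEc_zero, sub_zero]
  have hhE : IsHomogC i (applyEc (E k) c) := isHomog_applyE _ hhom
  have hDxp : diracc E (xUnderc E (pderivc k c))
      = (-(n:ℂ) - 2*((i:ℂ) - 1)) • pderivc k c := by
    rcases Nat.eq_zero_or_pos i with hi | hi
    · have hz : pderivc k c = 0 := pderiv_homog_zero (hi ▸ hhom) k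
      rw [hz, xUnderc_zero, diracc_zero, smul_zero]
    · have h1 := dirac_xUnder_homog hCl hhp
      rw [hDp, xUnderc_zero, sub_zero] at h1
      rw [h1, Nat.cast_sub hi, Nat.cast_one]
  have hDxE : diracc E (xUnderc E (applyEc (E k) c))
      = (-(n:ℂ) - 2*i) • applyEc (E k) c + (2:ℂ) • xUnderc E (pderivc k c) := by
    rw [dirac_xUnder_homog hCl hhE, hDE, xUnderc_smul]
    module
  have hDns : diracc E (normSqMulc (pderivc k c))
      = xUnderc E (pderivc k c) + xUnderc E (pderivc k c) := by
    rw [dirac_normSq, hDp, normSqMulc_zero, add_zero]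
  -- compPlus
  have cp_fin : (Function.support (compPlusC E i k c)).Finite := by
    simp only [compPlusC]
    exact finite_add (finite_mulX hfin k) (finite_smul _ (finite_sub
      (finite_xUnder (finite_applyE _ hfin)) (finite_normSq (finite_pderiv hfin k))))
  have cp_hom : IsHomogC (i + 1) (compPlusC E i k c) := by
    simp only [compPlusC]
    refine isHomog_add (isHomog_mulX hhom k) (isHomog_smul _ (isHomog_sub
      (isHomog_xUnder hhE) ?_))
    rcases Nat.eq_zero_or_pos i with hi | hi
    · have hz : pderivc k c = 0 := pderiv_homog_zero (hi ▸ hhom) k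
      rw [hz, normSqMulc_zero]
      exact isHomog_zero _
    · have h2 : i - 1 + 2 = i + 1 := by omega
      exact h2 ▸ isHomog_normSq hhp
  have cp_dirac : diracc E (compPlusC E i k c) = 0 := by
    simp only [compPlusC]
    rw [diracc_add, dirac_mulX, hmono, mulXc_zero, add_zero, diracc_smul, diracc_sub,
      hDxE, hDns]
    match_scalars <;> field_simp <;> ring
  -- compZero
  have cz_fin : (Function.support (compZeroC E i k c)).Finite := by
    simp only [compZeroC]
    exact finite_smul _ (finite_sub (finite_applyE _ hfin)
      (finite_smul _ (finite_xUnder (finite_pderiv hfin k))))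
  have cz_hom : IsHomogC i (compZeroC E i k c) := by
    simp only [compZeroC]
    refine isHomog_smul _ (isHomog_sub hhE (isHomog_smul _ ?_))
    rcases Nat.eq_zero_or_pos i with hi | hi
    · have hz : pderivc k c = 0 := pderiv_homog_zero (hi ▸ hhom) k
      rw [hz, xUnderc_zero]
      exact isHomog_zero _
    · have h2 : i - 1 + 1 = i := by omega
      exact h2 ▸ isHomog_xUnder hhp
  have cz_dirac : diracc E (compZeroC E i k c) = 0 := by
    simp only [compZeroC]
    rw [diracc_smul, diracc_sub, diracc_smul, hDE, hDxp]
    match_scalars <;> field_simp <;> ring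
  -- compMinus
  have cm_fin : (Function.support (compMinusC i k c)).Finite := by
    simp only [compMinusC]
    exact finite_smul _ (finite_pderiv hfin k)
  have cm_hom : IsHomogC (i - 1) (compMinusC i k c) := by
    simp only [compMinusC]
    exact isHomog_smul _ hhp
  have cm_dirac : diracc E (compMinusC i k c) = 0 := by
    simp only [compMinusC]
    rw [diracc_smul, hDp, smul_zero]
  -- decomposition
  have dec : mulXc k c
      = compPlusC E i k c - xUnderc E (compZeroC E i k c) + normSqMulc (compMinusC i k c) := by
    simp only [compPlusC, compZeroC, compMinusC]
    rw [xUnderc_smul, xUnderc_sub, xUnderc_smul, xUnder_xUnder hCl, normSqMulc_smul]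
    match_scalars <;> field_simp <;> ring
  exact ⟨⟨cp_fin, cp_hom, cp_dirac⟩, ⟨cz_fin, cz_hom, cz_dirac⟩,
    ⟨cm_fin, cm_hom, cm_dirac⟩, dec⟩
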